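/- For 0 < r ≤ 1/7, let w_r > 0 be the unique real number with Φ(−w_r) = γ₁([−r,r]) = 2Φ(r) − 1. Then w_r − r > 0 and Φ(−(w_r − r)) ≤ r·(w_r − r). -/

import Mathlib

open MeasureTheory Set
open scoped Pointwise RealInnerProductSpace ENNReal Classical

/-- The standard Gaussian measure on `ℝ^d`, with density `(2π)^(-d/2) exp(-‖x‖²/2)`
with respect to Lebesgue measure. -/
noncomputable def gaussD (d : ℕ) : Measure (EuclideanSpace ℝ (Fin d)) :=
  volume.withDensity fun x =>
    ENNReal.ofReal ((2 * Real.pi) ^ (-(d : ℝ) / 2) * Real.exp (-‖x‖ ^ 2 / 2))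

/-- The standard Gaussian measure on `ℝ`. -/
noncomputable def gauss1 : Measure ℝ :=
  volume.withDensity fun t =>
    ENNReal.ofReal ((2 * Real.pi) ^ (-(1 : ℝ) / 2) * Real.exp (-t ^ 2 / 2))

/-- The slice `(K - y) ∩ ℝu`, viewed as a subset of `ℝ` via the isometry
`t ↦ t • (u / ‖u‖)`. -/
def lineSlice {n : ℕ} (K : Set (EuclideanSpace ℝ (Fin n)))
    (u y : EuclideanSpace ℝ (Fin n)) : Set ℝ :=
  {t : ℝ | y + t • (‖u‖⁻¹ • u) ∈ K}

/-- `Z_B(K, u)`: the set of `y ∈ u^⊥` such that `(K - y) ∩ ℝu` has Euclidean length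
at least `2‖u‖`. -/
noncomputable def ZB {n : ℕ} (K : Set (EuclideanSpace ℝ (Fin n)))
    (u : EuclideanSpace ℝ (Fin n)) : Set (EuclideanSpace ℝ (Fin n)) :=
  {y | ⟪y, u⟫ = 0 ∧ ENNReal.ofReal (2 * ‖u‖) ≤ volume (lineSlice K u y)}

/-- Banaszczyk's transform `K * u = (K + [-u, u]) ∩ (Z_B + ℝu)`, with `K * 0 = K`. -/
noncomputable def bTransform {n : ℕ} (K : Set (EuclideanSpace ℝ (Fin n)))
    (u : EuclideanSpace ℝ (Fin n)) : Set (EuclideanSpace ℝ (Fin n)) :=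
  if u = 0 then K
  else (K + segment ℝ (-u) u) ∩ (ZB K u + Set.range fun t : ℝ => t • u)

/-- `Z_K(u)`: the set of `y ∈ u^⊥` such that `γ₁((K - y) ∩ ℝu) ≥ γ₁([-‖u‖, ‖u‖])`. -/
noncomputable def ZG {n : ℕ} (K : Set (EuclideanSpace ℝ (Fin n)))
    (u : EuclideanSpace ℝ (Fin n)) : Set (EuclideanSpace ℝ (Fin n)) :=
  {y | ⟪y, u⟫ = 0 ∧ gauss1 (Set.Icc (-‖u‖) ‖u‖) ≤ gauss1 (lineSlice K u y)}

/-- The Gaussian Banaszczyk transform `K ∘ u = (K + [-u, u]) ∩ (Z_K(u) + ℝu)`,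
with `K ∘ 0 = K`. -/
noncomputable def gTransform {n : ℕ} (K : Set (EuclideanSpace ℝ (Fin n)))
    (u : EuclideanSpace ℝ (Fin n)) : Set (EuclideanSpace ℝ (Fin n)) :=
  if u = 0 then K
  else (K + segment ℝ (-u) u) ∩ (ZG K u + Set.range fun t : ℝ => t • u)

/-- `Φ`, the cumulative distribution function of the standard Gaussian on `ℝ`. -/
noncomputable def Phi (t : ℝ) : ℝ := (gauss1 (Set.Iic t)).toReal

/-- `Φ⁻¹ : [0,1] → ℝ ∪ {±∞}`, the (extended-real-valued) inverse of `Φ`. -/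
noncomputable def PhiInv (p : ℝ) : EReal :=
  sSup ((fun t : ℝ => (t : EReal)) '' {t : ℝ | Phi t ≤ p})

/-!
Since the Gaussian density is at most `φ(0) = 1/√(2π)`, `Φ(-w_r) = γ₁([-r, r]) ≤ 2rφ(0) ≤ 2φ(0)/7`,
which is less than `Φ(-6/5)` (bounding `∫₀^{6/5} exp(-x²/2)` through a Taylor polynomial);
hence `w_r ≥ 6/5` and `w_r - r ≥ 37/35 > 1`. On `[-w_r, -(w_r - r)]` the density is at most
`φ(1)`, so `Φ(-(w_r - r)) ≤ Φ(-w_r) + rφ(1) ≤ r(2φ(0) + φ(1)) ≤ 37r/35 ≤ r(w_r - r)`.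
-/

open ProbabilityTheory Real
open scoped NNReal

lemma gaussianPDFReal_le_of_abs_sub_le {μ : ℝ} {v : ℝ≥0} {x y : ℝ} (h : |y - μ| ≤ |x - μ|) :
    gaussianPDFReal μ v x ≤ gaussianPDFReal μ v y := by
  unfold gaussianPDFReal
  gcongr (_ * exp (-?_ / _))
  exact sq_le_sq.mpr h

lemma intervalIntegral_gaussianPDFReal_le {μ : ℝ} {v : ℝ≥0} {a b y : ℝ} (hab : a ≤ b)
    (hy : ∀ x ∈ Icc a b, |y - μ| ≤ |x - μ|) :
    ∫ x in a..b, gaussianPDFReal μ v x ≤ (b - a) * gaussianPDFReal μ v y := by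
  calc ∫ x in a..b, gaussianPDFReal μ v x ≤ ∫ _ in a..b, gaussianPDFReal μ v y :=
        intervalIntegral.integral_mono_on hab (integrable_gaussianPDFReal μ v).intervalIntegrable
          intervalIntegrable_const fun x hx ↦ gaussianPDFReal_le_of_abs_sub_le (hy x hx)
    _ = (b - a) * gaussianPDFReal μ v y := by rw [intervalIntegral.integral_const, smul_eq_mul]

lemma gaussianPDFReal_zero_one (x : ℝ) :
    gaussianPDFReal 0 1 x = (√(2 * π))⁻¹ * exp (-x ^ 2 / 2) := by
  simp [gaussianPDFReal]

lemma gaussianPDFReal_zero_one_zero : gaussianPDFReal 0 1 0 = (√(2 * π))⁻¹ := by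
  rw [gaussianPDFReal_zero_one, zero_pow two_ne_zero, neg_zero, zero_div, exp_zero, mul_one]

lemma gauss1_eq_gaussianReal : gauss1 = gaussianReal 0 1 := by
  rw [gaussianReal_of_var_ne_zero _ one_ne_zero, gauss1]
  congr 1
  funext t
  rw [gaussianPDF, gaussianPDFReal_zero_one, sqrt_eq_rpow, ← rpow_neg (by positivity)]
  norm_num

lemma toReal_gauss1_eq_integral (s : Set ℝ) :
    (gauss1 s).toReal = ∫ x in s, gaussianPDFReal 0 1 x := by
  rw [gauss1_eq_gaussianReal, gaussianReal_apply_eq_integral _ one_ne_zero,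
    ENNReal.toReal_ofReal (integral_nonneg fun _ ↦ gaussianPDFReal_nonneg _ _ _)]

lemma toReal_gauss1_Icc {a b : ℝ} (hab : a ≤ b) :
    (gauss1 (Icc a b)).toReal = ∫ x in a..b, gaussianPDFReal 0 1 x := by
  rw [toReal_gauss1_eq_integral, integral_Icc_eq_integral_Ioc, intervalIntegral.integral_of_le hab]

lemma Phi_eq_cdf : Phi = cdf (gaussianReal 0 1) := by
  funext t
  rw [cdf_eq_real, Phi, gauss1_eq_gaussianReal, measureReal_def]

lemma monotone_Phi : Monotone Phi := Phi_eq_cdf ▸ monotone_cdf _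

lemma Phi_neg (t : ℝ) : Phi (-t) = 1 - Phi t := by
  have h := gaussianReal_map_neg (μ := 0) (v := 1)
  rw [neg_zero] at h
  have := nullSingletonClass_gaussianReal (μ := 0) (v := 1) one_ne_zero
  simp only [Phi_eq_cdf, cdf_eq_real]
  conv_lhs => rw [← h]
  rw [map_measureReal_apply measurable_neg measurableSet_Iic]
  simp only [Set.neg_preimage, Set.neg_Iic, neg_neg]
  rw [← measureReal_congr Ioi_ae_eq_Ici, ← compl_Iic, probReal_compl_eq_one_sub measurableSet_Iic]

lemma Phi_zero : Phi 0 = 1 / 2 := by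
  have h := Phi_neg 0
  rw [neg_zero] at h
  linarith

lemma Phi_sub_Phi (a b : ℝ) : Phi b - Phi a = ∫ x in a..b, gaussianPDFReal 0 1 x := by
  rw [Phi, Phi, toReal_gauss1_eq_integral, toReal_gauss1_eq_integral]
  exact intervalIntegral.integral_Iic_sub_Iic (integrable_gaussianPDFReal _ _).integrableOn
    (integrable_gaussianPDFReal _ _).integrableOn

lemma exp_neg_le_taylor {u : ℝ} (hu0 : 0 ≤ u) (hu1 : u ≤ 1) :
    exp (-u) ≤ 1 - u + u ^ 2 / 2 - u ^ 3 / 6 + 5 / 96 * u ^ 4 := by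
  have h := Real.exp_bound (x := -u) (by rwa [abs_neg, abs_of_nonneg hu0]) (n := 4) (by norm_num)
  simp only [Finset.sum_range_succ, Finset.sum_range_zero, abs_neg, abs_of_nonneg hu0] at h
  norm_num [Nat.factorial] at h
  linarith [(abs_le.mp h).2]

lemma integral_taylor_exp_neg_sq_div_two :
    ∫ x in (0:ℝ)..6 / 5, (1 - x^2/2 + x^4/8 - x^6/48 + 5/1536*x^8) = 2639793 / 2734375 := by
  have hderiv (x : ℝ) : HasDerivAt (fun x : ℝ ↦ x - x^3/6 + x^5/40 - x^7/336 + 5/13824*x^9)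
      (1 - x^2/2 + x^4/8 - x^6/48 + 5/1536*x^8) x := by
    refine ((((hasDerivAt_id' x).fun_sub ((hasDerivAt_pow 3 x).div_const 6)).fun_add
      ((hasDerivAt_pow 5 x).div_const 40)).fun_sub ((hasDerivAt_pow 7 x).div_const 336)).fun_add
      ((hasDerivAt_pow 9 x).const_mul (5/13824)) |>.congr_deriv ?_
    push_cast
    ring
  rw [intervalIntegral.integral_eq_sub_of_hasDerivAt (fun x _ ↦ hderiv x)
    ((by fun_prop : Continuous _).intervalIntegrable _ _)]
  norm_num

-- `Φ(-6/5) ≈ 0.1151` barely exceeds `2φ(0)/7 ≈ 0.1140`, so a degree-8 Taylor bound is needed.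
lemma integral_exp_neg_sq_div_two_le :
    ∫ x in (0:ℝ)..6 / 5, exp (-x ^ 2 / 2) ≤ 2639793 / 2734375 := by
  rw [← integral_taylor_exp_neg_sq_div_two]
  refine intervalIntegral.integral_mono_on (by norm_num)
    ((by fun_prop : Continuous _).intervalIntegrable _ _)
    ((by fun_prop : Continuous _).intervalIntegrable _ _) fun x hx ↦ ?_
  have h := exp_neg_le_taylor (u := x ^ 2 / 2) (by positivity) (by nlinarith [hx.1, hx.2])
  rw [neg_div]
  linarith

lemma gaussianPDFReal_zero_one_zero_lt : gaussianPDFReal 0 1 0 < 200 / 501 := by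
  rw [gaussianPDFReal_zero_one_zero, inv_lt_comm₀ (by positivity) (by norm_num),
    lt_sqrt (by norm_num)]
  linarith [pi_gt_d2]

lemma gaussianPDFReal_zero_one_one_le :
    gaussianPDFReal 0 1 1 ≤ 8 / 13 * gaussianPDFReal 0 1 0 := by
  have h : exp (-1 / 2) ≤ 8 / 13 := by
    rw [neg_div, exp_neg, inv_le_comm₀ (exp_pos _) (by norm_num)]
    linarith [quadratic_le_exp_of_nonneg (x := 1 / 2) (by norm_num)]
  rw [gaussianPDFReal_zero_one, gaussianPDFReal_zero_one_zero, one_pow, mul_comm (8 / 13)]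
  exact mul_le_mul_of_nonneg_left h (by positivity)

lemma lt_Phi_neg_six_fifths : 2 / 7 * gaussianPDFReal 0 1 0 < Phi (-(6 / 5)) := by
  have h := Phi_sub_Phi 0 (6 / 5)
  simp only [gaussianPDFReal_zero_one, intervalIntegral.integral_const_mul] at h
  have hI := mul_le_mul_of_nonneg_left integral_exp_neg_sq_div_two_le
    (inv_nonneg.mpr (sqrt_nonneg (2 * π)))
  have hc := gaussianPDFReal_zero_one_zero_lt
  rw [gaussianPDFReal_zero_one_zero] at hc ⊢
  linarith [Phi_neg (6 / 5), Phi_zero]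

theorem Phi_neg_wr_sub_r_le_general (r w : ℝ) (hr0 : 0 < r) (hr : r ≤ 1 / 7)
    (hwdef : Phi (-w) = (gauss1 (Set.Icc (-r) r)).toReal) :
    0 < w - r ∧ Phi (-(w - r)) ≤ r * (w - r) := by
  have hφ0 := gaussianPDFReal_pos 0 1 0 one_ne_zero
  have hPhi_w : Phi (-w) ≤ 2 * r * gaussianPDFReal 0 1 0 := by
    have h := intervalIntegral_gaussianPDFReal_le (μ := 0) (v := 1) (y := 0)
      (by linarith : -r ≤ r) (by simp)
    rw [hwdef, toReal_gauss1_Icc (by linarith)]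
    linarith
  have hw_ge : 6 / 5 ≤ w := by
    by_contra! h
    have := monotone_Phi (neg_le_neg h.le)
    nlinarith [lt_Phi_neg_six_fifths]
  refine ⟨by linarith, ?_⟩
  have hstep : Phi (-(w - r)) - Phi (-w) ≤ r * gaussianPDFReal 0 1 1 := by
    have h := intervalIntegral_gaussianPDFReal_le (μ := 0) (v := 1) (y := 1)
      (by linarith : -w ≤ -(w - r)) fun x hx ↦ by
        rw [sub_zero, sub_zero, abs_one, abs_of_neg (by linarith [hx.2])]; linarith [hx.2]
    rw [Phi_sub_Phi]
    linarith
  calc Phi (-(w - r)) ≤ 2 * r * gaussianPDFReal 0 1 0 + r * gaussianPDFReal 0 1 1 := by linarith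
    _ ≤ r * (34 / 13 * gaussianPDFReal 0 1 0) := by nlinarith [gaussianPDFReal_zero_one_one_le]
    _ ≤ r * (w - r) := by nlinarith [gaussianPDFReal_zero_one_zero_lt]

/-- For `0 < r ≤ 1/7` and `w_r > 0` defined by `Φ(-w_r) = γ₁([-r, r])`, one has
`w_r - r > 0` and `Φ(-(w_r - r)) ≤ r (w_r - r)`. -/
theorem Phi_neg_wr_sub_r_le (r w : ℝ) (hr0 : 0 < r) (hr : r ≤ 1 / 7) (hw : 0 < w)
    (hwdef : Phi (-w) = (gauss1 (Set.Icc (-r) r)).toReal) :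
    0 < w - r ∧ Phi (-(w - r)) ≤ r * (w - r) :=
  Phi_neg_wr_sub_r_le_general r w hr0 hr hwdef
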